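/- arXiv:2201.05269 — 2 statements merged into one kernel-verified Lean document; each statement's English description precedes it below -/
import Mathlib

section
/- Let I = (c,d) ⊂ ℝ, p ∈ (1,∞), p' = p/(p−1), w : I → (0,∞) measurable with ∫_x^d w^p < ∞ for all x ∈ I. Suppose g̃ is locally absolutely continuous and bounded on I, g̃(x) = −χ_{(c,b]}(x) ∫_x^d Dg̃ for some b ∈ I, and Dg̃/w ∈ L^{p'}(I). Then for every f ∈ Ch_{p,w}(I): |∫_I f g̃| ≤ (∫_I |Dg̃/w|^{p'})^{1/p'} · (∫_I |w(x) ∫_c^x f|^p dx)^{1/p}. -/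
open MeasureTheory Set Filter
open scoped Topology

/-!
On `(c, b]` the function `g̃` is a primitive of `v` vanishing at `b` (it vanishes on `(b, d)` and
is continuous), while `F x = ∫_{(c,x]} f` is a primitive of `f` vanishing at `c`. Integrating by
parts on `[a, b]` and letting `a → c` gives `∫ f g̃ = -∫_{(c,b]} F v`; the boundary term
`F a * g̃ a` tends to `0` because `g̃` is bounded. Hölder's inequality applied to the splitting
`F v = (v / w) (w F)` then bounds the right-hand side.
-/

/-- `g` is locally absolutely continuous on `s` with derivative `v`. -/
def IsPrimitiveOn (g v : ℝ → ℝ) (s : Set ℝ) : Prop :=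
  ∀ x ∈ s, ∀ y ∈ s, IntegrableOn v (uIcc x y) ∧ g y - g x = ∫ t in x..y, v t

namespace IsPrimitiveOn

variable {g v : ℝ → ℝ} {s : Set ℝ}

theorem mono {t : Set ℝ} (hg : IsPrimitiveOn g v s) (hts : t ⊆ s) : IsPrimitiveOn g v t :=
  fun x hx y hy => hg x (hts hx) y (hts hy)

theorem eqOn_add_integral (hg : IsPrimitiveOn g v s) {a : ℝ} (ha : a ∈ s) :
    EqOn g (fun x => g a + ∫ t in a..x, v t) s := fun x hx => by
  have := (hg a ha x hx).2
  simp only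
  linarith

theorem continuousOn (hg : IsPrimitiveOn g v s) (hs : IsOpen s) : ContinuousOn g s := by
  intro x hx
  obtain ⟨a, b, -, hab_nhds, habs⟩ := exists_Icc_mem_subset_of_mem_nhds (hs.mem_nhds hx)
  have hab : a ≤ b := nonempty_Icc.1 (nonempty_of_mem hab_nhds)
  have ha : a ∈ s := habs (left_mem_Icc.2 hab)
  have hb : b ∈ s := habs (right_mem_Icc.2 hab)
  have hprim : ContinuousOn (fun y => g a + ∫ t in a..y, v t) (uIcc a b) :=
    (intervalIntegral.continuousOn_primitive_interval (hg a ha b hb).1).const_add _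
  have hIcc : Icc a b = uIcc a b := (uIcc_of_le hab).symm
  refine (((hprim.congr ?_).mono hIcc.le).continuousAt hab_nhds).continuousWithinAt
  exact (hg.eqOn_add_integral ha).mono (hIcc ▸ habs)

theorem exists_absolutelyContinuousOnInterval (hg : IsPrimitiveOn g v s) {a b : ℝ}
    (ha : a ∈ s) (hb : b ∈ s) (hab : uIcc a b ⊆ s) :
    ∃ G, AbsolutelyContinuousOnInterval G a b ∧ EqOn g G (uIcc a b) ∧
      ∀ᵐ x, x ∈ uIcc a b → deriv G x = v x := by
  have hv : IntervalIntegrable v volume a b := (hg a ha b hb).1.intervalIntegrable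
  refine ⟨fun x => g a + ∫ t in a..x, v t, ?_, (hg.eqOn_add_integral ha).mono hab, ?_⟩
  · exact (LipschitzWith.const (g a)).lipschitzOnWith.absolutelyContinuousOnInterval.add
      (hv.absolutelyContinuousOnInterval_intervalIntegral left_mem_uIcc)
  · filter_upwards [hv.ae_hasDerivAt_integral] with x hx hxab
    exact ((hx hxab a left_mem_uIcc).const_add (g a)).deriv

theorem integral_mul_add_mul_eq_sub {G w : ℝ → ℝ} [OrdConnected s]
    (hg : IsPrimitiveOn g v s) (hG : IsPrimitiveOn G w s) {a b : ℝ} (ha : a ∈ s) (hb : b ∈ s) :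
    ∫ x in a..b, v x * G x + g x * w x = g b * G b - g a * G a := by
  have hab := OrdConnected.uIcc_subset ‹_› ha hb
  obtain ⟨g', hg'ac, hgg', hg'd⟩ := hg.exists_absolutelyContinuousOnInterval ha hb hab
  obtain ⟨G', hG'ac, hGG', hG'd⟩ := hG.exists_absolutelyContinuousOnInterval ha hb hab
  rw [hgg' left_mem_uIcc, hgg' right_mem_uIcc, hGG' left_mem_uIcc, hGG' right_mem_uIcc,
    ← hg'ac.integral_deriv_mul_eq_sub hG'ac]
  refine intervalIntegral.integral_congr_ae ?_
  filter_upwards [hg'd, hG'd] with x hxg hxG hx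
  have hx' : x ∈ uIcc a b := uIoc_subset_uIcc hx
  rw [hxg hx', hxG hx', hgg' hx', hGG' hx']

end IsPrimitiveOn

theorem isPrimitiveOn_integral_Ioc {f : ℝ → ℝ} {c : ℝ} {s : Set ℝ} (hs : s ⊆ Ici c)
    (hf : ∀ x ∈ s, IntegrableOn f (Ioc c x)) :
    IsPrimitiveOn (fun x => ∫ t in Ioc c x, f t) f s := by
  intro x hx y hy
  have hcx : IntervalIntegrable f volume c x :=
    (intervalIntegrable_iff_integrableOn_Ioc_of_le (hs hx)).2 (hf x hx)
  have hcy : IntervalIntegrable f volume c y :=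
    (intervalIntegrable_iff_integrableOn_Ioc_of_le (hs hy)).2 (hf y hy)
  refine ⟨(intervalIntegrable_iff' ..).1 (hcx.symm.trans hcy), ?_⟩
  dsimp only
  rw [← intervalIntegral.integral_of_le (hs hx), ← intervalIntegral.integral_of_le (hs hy),
    intervalIntegral.integral_interval_sub_left hcy hcx]

theorem memLp_ofReal_of_integrable_abs_rpow {α : Type*} [MeasurableSpace α] {μ : Measure α}
    {f : α → ℝ} {p : ℝ} (hp : 0 < p) (hf : AEStronglyMeasurable f μ)
    (hfp : Integrable (fun x => |f x| ^ p) μ) : MemLp f (ENNReal.ofReal p) μ :=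
  (integrable_norm_rpow_iff hf (by simpa using hp) ENNReal.ofReal_ne_top).1
    (by simpa [ENNReal.toReal_ofReal hp.le] using hfp)

theorem integrable_mul_and_integral_abs_mul_le {α : Type*} [MeasurableSpace α] {μ : Measure α}
    {p q : ℝ} (hpq : p.HolderConjugate q) {f g : α → ℝ}
    (hf : AEStronglyMeasurable f μ) (hg : AEStronglyMeasurable g μ)
    (hfp : Integrable (fun x => |f x| ^ p) μ) (hgq : Integrable (fun x => |g x| ^ q) μ) :
    Integrable (fun x => f x * g x) μ ∧
      ∫ x, |f x * g x| ∂μ ≤ (∫ x, |f x| ^ p ∂μ) ^ (1 / p) * (∫ x, |g x| ^ q ∂μ) ^ (1 / q) := by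
  have hfLp := memLp_ofReal_of_integrable_abs_rpow hpq.pos hf hfp
  have hgLq := memLp_ofReal_of_integrable_abs_rpow hpq.symm.pos hg hgq
  have := hpq.ennrealOfReal
  refine ⟨hfLp.integrable_mul hgLq, ?_⟩
  simpa only [Real.norm_eq_abs, abs_mul] using integral_mul_norm_le_Lp_mul_Lq hpq hfLp hgLq

theorem integrableOn_mul_and_integral_abs_mul_le_of_weight {p q : ℝ} (hpq : p.HolderConjugate q)
    {s : Set ℝ} (hs : MeasurableSet s) {F v w : ℝ → ℝ} (hw : ∀ x ∈ s, w x ≠ 0)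
    (hv : AEStronglyMeasurable (fun x => v x / w x) (volume.restrict s))
    (hF : AEStronglyMeasurable (fun x => w x * F x) (volume.restrict s))
    (hvq : IntegrableOn (fun x => |v x / w x| ^ q) s)
    (hFp : IntegrableOn (fun x => |w x * F x| ^ p) s) :
    IntegrableOn (fun x => F x * v x) s ∧
      ∫ x in s, |F x * v x| ≤
        (∫ x in s, |v x / w x| ^ q) ^ (1 / q) * (∫ x in s, |w x * F x| ^ p) ^ (1 / p) := by
  have hcancel : ∀ x ∈ s, v x / w x * (w x * F x) = F x * v x := fun x hx => by
    field_simp [hw x hx]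
  obtain ⟨hint, hle⟩ := integrable_mul_and_integral_abs_mul_le hpq.symm hv hF hvq hFp
  refine ⟨hint.congr ((ae_restrict_mem hs).mono hcancel), ?_⟩
  rwa [setIntegral_congr_fun hs fun x hx => by rw [hcancel x hx]] at hle

theorem tendsto_integral_left_nhdsWithin_Ioo {g : ℝ → ℝ} {c b : ℝ} (hcb : c ≤ b)
    (hg : IntegrableOn g (Ioc c b)) :
    Tendsto (fun a => ∫ t in a..b, g t) (𝓝[Ioo c b] c) (𝓝 (∫ t in c..b, g t)) := by
  have hIcc : uIcc c b = Icc c b := uIcc_of_le hcb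
  have hg' : IntegrableOn g (uIcc c b) :=
    (intervalIntegrable_iff' ..).1 ((intervalIntegrable_iff_integrableOn_Ioc_of_le hcb).2 hg)
  exact ((intervalIntegral.continuousOn_primitive_interval_left hg' c left_mem_uIcc).mono
    (hIcc ▸ Ioo_subset_Icc_self)).tendsto

theorem tendsto_integral_Ioc_nhdsWithin_Ioo {f : ℝ → ℝ} {c b : ℝ} (hcb : c ≤ b)
    (hf : IntegrableOn f (Ioc c b)) :
    Tendsto (fun a => ∫ t in Ioc c a, f t) (𝓝[Ioo c b] c) (𝓝 0) := by
  have hIcc : uIcc c b = Icc c b := uIcc_of_le hcb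
  have hf' : IntervalIntegrable f volume c b :=
    (intervalIntegrable_iff_integrableOn_Ioc_of_le hcb).2 hf
  have h := ((intervalIntegral.continuousOn_primitive_interval' hf' left_mem_uIcc c
    left_mem_uIcc).mono (hIcc ▸ Ioo_subset_Icc_self)).tendsto
  rw [intervalIntegral.integral_same] at h
  refine h.congr' (eventually_nhdsWithin_of_forall fun a ha => ?_)
  exact intervalIntegral.integral_of_le ha.1.le

theorem IsPrimitiveOn.apply_eq_zero_of_eqOn_Ioo {g v : ℝ → ℝ} {c b d : ℝ}
    (hg : IsPrimitiveOn g v (Ioo c d)) (hb : b ∈ Ioo c d) (hg0 : EqOn g 0 (Ioo b d)) : g b = 0 := by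
  have hlim : Tendsto g (𝓝[>] b) (𝓝 (g b)) :=
    ((hg.continuousOn isOpen_Ioo b hb).continuousAt (Ioo_mem_nhds hb.1 hb.2)).tendsto.mono_left
      nhdsWithin_le_nhds
  refine tendsto_nhds_unique hlim (tendsto_const_nhds.congr' ?_)
  filter_upwards [Ioo_mem_nhdsGT hb.2] with x hx
  exact (hg0 hx).symm

theorem integrableOn_mul_and_integral_Ioc_mul_eq_neg_integral_Ioc_primitive_mul
    {f g v : ℝ → ℝ} {c b d : ℝ} (hcb : c < b) (hbd : b < d) (hf : IntegrableOn f (Ioc c b))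
    (hg : IsPrimitiveOn g v (Ioo c d)) (hgb : g b = 0) (hbdd : ∃ M, ∀ x ∈ Ioo c d, |g x| ≤ M)
    (hFv : IntegrableOn (fun x => (∫ t in Ioc c x, f t) * v x) (Ioc c b)) :
    IntegrableOn (fun x => f x * g x) (Ioc c b) ∧
      ∫ x in Ioc c b, f x * g x = -∫ x in Ioc c b, (∫ t in Ioc c x, f t) * v x := by
  set F := fun x => ∫ t in Ioc c x, f t
  obtain ⟨M, hM⟩ := hbdd
  have hsub : Ioc c b ⊆ Ioo c d := Ioc_subset_Ioo_right hbd
  have hfg : IntegrableOn (fun x => f x * g x) (Ioc c b) :=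
    hf.mul_bdd (((hg.continuousOn isOpen_Ioo).mono hsub).aestronglyMeasurable measurableSet_Ioc)
      ((ae_restrict_mem measurableSet_Ioc).mono fun x hx =>
        (Real.norm_eq_abs _).trans_le (hM x (hsub hx)))
  have hF : IsPrimitiveOn F f (Ioc c b) := isPrimitiveOn_integral_Ioc
    (fun _ hx => mem_Ici.2 hx.1.le) fun x hx => hf.mono_set (Ioc_subset_Ioc_right hx.2)
  have hIBP : ∀ a ∈ Ioo c b, ∫ x in a..b, f x * g x = -(∫ x in a..b, F x * v x) - F a * g a := by
    intro a ha
    have hab : Ioc a b ⊆ Ioc c b := Ioc_subset_Ioc_left ha.1.le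
    have h := hF.integral_mul_add_mul_eq_sub (hg.mono hsub) (Ioo_subset_Ioc_self ha)
      (right_mem_Ioc.2 hcb)
    rw [intervalIntegral.integral_add
      ((intervalIntegrable_iff_integrableOn_Ioc_of_le ha.2.le).2 (hfg.mono_set hab))
      ((intervalIntegrable_iff_integrableOn_Ioc_of_le ha.2.le).2 (hFv.mono_set hab)),
      hgb, mul_zero] at h
    linarith
  have := left_nhdsWithin_Ioo_neBot hcb
  have hboundary : Tendsto (fun a => F a * g a) (𝓝[Ioo c b] c) (𝓝 0) :=
    (tendsto_integral_Ioc_nhdsWithin_Ioo hcb.le hf).zero_mul_isBoundedUnder_le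
      (isBoundedUnder_of_eventually_le (a := M) (eventually_nhdsWithin_of_forall fun a ha =>
        (Real.norm_eq_abs _).trans_le (hM a (hsub (Ioo_subset_Ioc_self ha)))))
  have hlim := ((tendsto_integral_left_nhdsWithin_Ioo hcb.le hFv).neg.sub hboundary).congr'
    (eventually_nhdsWithin_of_forall fun a ha => (hIBP a ha).symm)
  refine ⟨hfg, ?_⟩
  rw [← intervalIntegral.integral_of_le hcb.le, ← intervalIntegral.integral_of_le hcb.le,
    tendsto_nhds_unique (tendsto_integral_left_nhdsWithin_Ioo hcb.le hfg) hlim, sub_zero]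

theorem stmt11_general (c d p q : ℝ) (hp : 1 < p) (hq : q = p / (p - 1))
    (w : ℝ → ℝ) (hwm : Measurable w)
    (hwpos : ∀ x ∈ Ioo c d, 0 < w x)
    (gt v : ℝ → ℝ) (b : ℝ) (hb : b ∈ Ioo c d) (hvm : Measurable v)
    (hAC : ∀ x ∈ Ioo c d, ∀ y ∈ Ioo c d,
      IntegrableOn v (uIcc x y) ∧ gt y - gt x = ∫ t in x..y, v t)
    (hbdd : ∃ M : ℝ, ∀ x ∈ Ioo c d, |gt x| ≤ M)
    (hform : ∀ x ∈ Ioo c d,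
      gt x = -(Ioc c b).indicator (fun y => ∫ t in Ioo y d, v t) x)
    (hvq : IntegrableOn (fun x => |v x / w x| ^ q) (Ioo c d))
    (f : ℝ → ℝ)
    (hfloc : ∀ x ∈ Ioo c d, IntegrableOn f (Ioc c x))
    (hfCh : IntegrableOn (fun x => |w x * ∫ t in Ioc c x, f t| ^ p) (Ioo c d)) :
    IntegrableOn (fun x => f x * gt x) (Ioo c d) ∧
    |∫ x in Ioo c d, f x * gt x| ≤
      (∫ x in Ioo c d, |v x / w x| ^ q) ^ (1/q) *
        (∫ x in Ioo c d, |w x * ∫ t in Ioc c x, f t| ^ p) ^ (1/p) := by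
  obtain ⟨hcb, hbd⟩ := hb
  have hsub : Ioc c b ⊆ Ioo c d := Ioc_subset_Ioo_right hbd
  have hgt_zero : ∀ x ∈ Ioo c d \ Ioc c b, f x * gt x = 0 := fun x hx => by
    rw [hform x hx.1, indicator_of_notMem hx.2, neg_zero, mul_zero]
  have hgtb : gt b = 0 := IsPrimitiveOn.apply_eq_zero_of_eqOn_Ioo hAC ⟨hcb, hbd⟩ fun x hx => by
    rw [hform x ⟨hcb.trans hx.1, hx.2⟩, indicator_of_notMem fun h => hx.1.not_ge h.2, neg_zero]
    rfl
  have hF_cont : ContinuousOn (fun x => ∫ t in Ioc c x, f t) (Ioo c d) :=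
    (isPrimitiveOn_integral_Ioc (fun _ hx => mem_Ici.2 hx.1.le) hfloc).continuousOn isOpen_Ioo
  obtain ⟨hFv, hHolder⟩ := integrableOn_mul_and_integral_abs_mul_le_of_weight
    ((Real.holderConjugate_iff_eq_conjExponent hp).2 hq) measurableSet_Ioo
    (fun x hx => (hwpos x hx).ne') (hvm.div hwm).aestronglyMeasurable
    (hwm.aestronglyMeasurable.mul (hF_cont.aestronglyMeasurable measurableSet_Ioo)) hvq hfCh
  obtain ⟨hfg, hparts⟩ := integrableOn_mul_and_integral_Ioc_mul_eq_neg_integral_Ioc_primitive_mul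
    hcb hbd (hfloc b ⟨hcb, hbd⟩) hAC hgtb hbdd (hFv.mono_set hsub)
  refine ⟨hfg.of_forall_sdiff_eq_zero measurableSet_Ioo hgt_zero, ?_⟩
  rw [setIntegral_eq_of_subset_of_forall_sdiff_eq_zero measurableSet_Ioo hsub hgt_zero, hparts,
    abs_neg]
  calc _ ≤ ∫ x in Ioc c b, |(∫ t in Ioc c x, f t) * v x| := abs_integral_le_integral_abs
    _ ≤ ∫ x in Ioo c d, |(∫ t in Ioc c x, f t) * v x| :=
      setIntegral_mono_set hFv.abs (.of_forall fun _ => abs_nonneg _) hsub.eventuallyLE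
    _ ≤ _ := hHolder

theorem stmt11 (c d p q : ℝ) (hcd : c < d) (hp : 1 < p) (hq : q = p / (p - 1))
    (w : ℝ → ℝ) (hwm : Measurable w)
    (hwpos : ∀ x ∈ Ioo c d, 0 < w x)
    (hwint : ∀ x ∈ Ioo c d, IntegrableOn (fun t => w t ^ p) (Ioo x d))
    (gt v : ℝ → ℝ) (b : ℝ) (hb : b ∈ Ioo c d) (hvm : Measurable v)
    (hAC : ∀ x ∈ Ioo c d, ∀ y ∈ Ioo c d,
      IntegrableOn v (uIcc x y) ∧ gt y - gt x = ∫ t in x..y, v t)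
    (hbdd : ∃ M : ℝ, ∀ x ∈ Ioo c d, |gt x| ≤ M)
    (hvt : ∀ x ∈ Ioo c d, IntegrableOn v (Ioo x d))
    (hform : ∀ x ∈ Ioo c d,
      gt x = -(Ioc c b).indicator (fun y => ∫ t in Ioo y d, v t) x)
    (hvq : IntegrableOn (fun x => |v x / w x| ^ q) (Ioo c d))
    (f : ℝ → ℝ) (hfm : Measurable f)
    (hfloc : ∀ x ∈ Ioo c d, IntegrableOn f (Ioc c x))
    (hfCh : IntegrableOn (fun x => |w x * ∫ t in Ioc c x, f t| ^ p) (Ioo c d)) :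
    IntegrableOn (fun x => f x * gt x) (Ioo c d) ∧
    |∫ x in Ioo c d, f x * gt x| ≤
      (∫ x in Ioo c d, |v x / w x| ^ q) ^ (1/q) *
        (∫ x in Ioo c d, |w x * ∫ t in Ioc c x, f t| ^ p) ^ (1/p) :=
  stmt11_general c d p q hp hq w hwm hwpos gt v b hb hvm hAC hbdd hform hvq f hfloc hfCh
end

section
/- Let I = (0,∞), p ∈ (1,∞), w : I → (0,∞) measurable with ∫_x^∞ w^p < ∞ for all x > 0 and ∫_0^∞ w^p = ∞. If f is locally integrable near 0 and ∫_0^∞ |w(x) ∫_0^x f|^p dx < ∞, then liminf_{s→∞} |∫_0^s f|^p ∫_s^∞ w^p = 0. -/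
open MeasureTheory Set Filter Topology

/-!
Write `W s = ∫_s^∞ v` and `T a = ∫_a^∞ h v`; both tend to `0` as `s, a → ∞`. If `ε ≤ h x W x` for
all `x ≥ a`, then, since `W` is antitone, `ε v x ≤ h x W x v x ≤ W a · h x v x` on `(a, ∞)`, and
integrating gives `ε W a ≤ W a T a`. As `W a > 0` is forced by `ε ≤ h a W a`, this says `ε ≤ T a`,
which fails for large `a`. Hence `h s W s < ε` for arbitrarily large `s`. For the theorem take
`h = |∫_0^s f|^p` and `v = w^p`.
-/

theorem Filter.liminf_eq_zero_of_frequently_lt {α : Type*} {l : Filter α} {u : α → ℝ}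
    (h0 : ∀ᶠ x in l, 0 ≤ u x) (hsmall : ∀ ε > 0, ∃ᶠ x in l, u x < ε) : liminf u l = 0 := by
  have hle : ∀ ε > 0, ∃ᶠ x in l, u x ≤ ε := fun ε hε => (hsmall ε hε).mono fun _ => le_of_lt
  refine le_antisymm (le_of_forall_pos_le_add fun ε hε => ?_) ?_
  · simpa using liminf_le_of_frequently_le (hle ε hε) ⟨0, by simpa using h0⟩
  · exact le_liminf_of_le (IsCoboundedUnder.of_frequently_le (hle 1 one_pos)) h0

section TailIntegral

variable {μ : Measure ℝ} {h v : ℝ → ℝ} {c : ℝ}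

theorem tendsto_setIntegral_Ioi_atTop_zero (hv : IntegrableOn v (Ioi c) μ) :
    Tendsto (fun s => ∫ x in Ioi s, v x ∂μ) atTop (𝓝 0) := by
  have hempty : ⋂ s : ℝ, Ioi s = ∅ :=
    eq_empty_of_forall_notMem fun x hx => lt_irrefl x (mem_iInter.1 hx x)
  simpa [hempty] using tendsto_setIntegral_of_antitone (μ := μ) (fun _ => measurableSet_Ioi)
    (fun _ _ hst => Ioi_subset_Ioi hst) ⟨c, hv⟩

theorem setIntegral_Ioi_nonneg_of_le {a : ℝ} (hca : c ≤ a) (hv0 : ∀ x ∈ Ioi c, 0 ≤ v x) :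
    0 ≤ ∫ x in Ioi a, v x ∂μ :=
  setIntegral_nonneg measurableSet_Ioi fun x hx => hv0 x (hca.trans_lt hx)

theorem setIntegral_Ioi_le_of_le {a b : ℝ} (hca : c ≤ a) (hab : a ≤ b)
    (hv0 : ∀ x ∈ Ioi c, 0 ≤ v x) (hv : IntegrableOn v (Ioi c) μ) :
    ∫ x in Ioi b, v x ∂μ ≤ ∫ x in Ioi a, v x ∂μ :=
  setIntegral_mono_set (hv.mono_set (Ioi_subset_Ioi hca))
    ((ae_restrict_iff' measurableSet_Ioi).2 (.of_forall fun x hx => hv0 x (hca.trans_lt hx)))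
    (Ioi_subset_Ioi hab).eventuallyLE

theorem mul_setIntegral_Ioi_le_of_forall_le_mul {a ε : ℝ} (hca : c ≤ a)
    (hh0 : ∀ x ∈ Ioi c, 0 ≤ h x) (hv0 : ∀ x ∈ Ioi c, 0 ≤ v x) (hv : IntegrableOn v (Ioi c) μ)
    (hhv : IntegrableOn (fun x => h x * v x) (Ioi c) μ)
    (hε : ∀ x ∈ Ioi a, ε ≤ h x * ∫ t in Ioi x, v t ∂μ) :
    ε * ∫ x in Ioi a, v x ∂μ ≤ (∫ x in Ioi a, v x ∂μ) * ∫ x in Ioi a, h x * v x ∂μ := by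
  set W := fun s => ∫ t in Ioi s, v t ∂μ
  have hpoint : ∀ x ∈ Ioi a, ε * v x ≤ W a * (h x * v x) := fun x hx => by
    have hcx : c < x := hca.trans_lt hx
    calc ε * v x ≤ h x * W x * v x := mul_le_mul_of_nonneg_right (hε x hx) (hv0 x hcx)
      _ ≤ h x * W a * v x :=
        mul_le_mul_of_nonneg_right (mul_le_mul_of_nonneg_left
          (setIntegral_Ioi_le_of_le hca hx.le hv0 hv) (hh0 x hcx)) (hv0 x hcx)
      _ = W a * (h x * v x) := by ring
  rw [← integral_const_mul, ← integral_const_mul]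
  exact setIntegral_mono_on ((hv.mono_set (Ioi_subset_Ioi hca)).const_mul ε)
    ((hhv.mono_set (Ioi_subset_Ioi hca)).const_mul (W a)) measurableSet_Ioi hpoint

theorem frequently_mul_setIntegral_Ioi_lt {ε : ℝ} (hε : 0 < ε)
    (hh0 : ∀ x ∈ Ioi c, 0 ≤ h x) (hv0 : ∀ x ∈ Ioi c, 0 ≤ v x) (hv : IntegrableOn v (Ioi c) μ)
    (hhv : IntegrableOn (fun x => h x * v x) (Ioi c) μ) :
    ∃ᶠ s in atTop, h s * ∫ t in Ioi s, v t ∂μ < ε := by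
  by_contra hne
  obtain ⟨A, hA⟩ := eventually_atTop.1 (not_frequently.1 hne)
  simp only [not_lt] at hA
  obtain ⟨a, hTa, hAca⟩ := ((tendsto_setIntegral_Ioi_atTop_zero hhv).eventually
    (eventually_lt_nhds hε) |>.and (eventually_ge_atTop (max A c))).exists
  have hca : c ≤ a := (le_max_right A c).trans hAca
  have hAa : A ≤ a := (le_max_left A c).trans hAca
  have hWa : 0 < ∫ x in Ioi a, v x ∂μ := by
    refine (setIntegral_Ioi_nonneg_of_le hca hv0).lt_of_ne fun hW => ?_
    have := hA a hAa
    rw [← hW, mul_zero] at this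
    exact hε.not_ge this
  have := mul_setIntegral_Ioi_le_of_forall_le_mul hca hh0 hv0 hv hhv
    fun x hx => hA x (hAa.trans (le_of_lt hx))
  rw [mul_comm ε] at this
  exact hTa.not_ge (le_of_mul_le_mul_left this hWa)

theorem liminf_mul_setIntegral_Ioi_eq_zero
    (hh0 : ∀ x ∈ Ioi c, 0 ≤ h x) (hv0 : ∀ x ∈ Ioi c, 0 ≤ v x) (hv : IntegrableOn v (Ioi c) μ)
    (hhv : IntegrableOn (fun x => h x * v x) (Ioi c) μ) :
    liminf (fun s => h s * ∫ t in Ioi s, v t ∂μ) atTop = 0 := by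
  refine liminf_eq_zero_of_frequently_lt ?_
    fun ε hε => frequently_mul_setIntegral_Ioi_lt hε hh0 hv0 hv hhv
  filter_upwards [eventually_gt_atTop c] with s hs
  exact mul_nonneg (hh0 s hs) (setIntegral_Ioi_nonneg_of_le hs.le hv0)

end TailIntegral

theorem stmt14_general (p : ℝ) (w : ℝ → ℝ)
    (hwpos : ∀ x ∈ Ioi (0:ℝ), 0 < w x)
    (hwint : ∀ x ∈ Ioi (0:ℝ), IntegrableOn (fun t => w t ^ p) (Ioi x))
    (f : ℝ → ℝ)
    (hfCh : IntegrableOn (fun x => |w x * ∫ t in Ioc (0:ℝ) x, f t| ^ p) (Ioi 0)) :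
    Filter.liminf
      (fun s => |∫ t in Ioc (0:ℝ) s, f t| ^ p * ∫ t in Ioi s, w t ^ p)
      atTop = 0 := by
  have hw1 : ∀ x ∈ Ioi (1:ℝ), 0 < w x := fun x hx => hwpos x (mem_Ioi.2 (zero_lt_one.trans hx))
  refine liminf_mul_setIntegral_Ioi_eq_zero (c := 1) (fun _ _ => by positivity)
    (fun x hx => (Real.rpow_pos_of_pos (hw1 x hx) p).le) (hwint 1 (mem_Ioi.2 zero_lt_one)) ?_
  refine (hfCh.mono_set (Ioi_subset_Ioi zero_le_one)).congr_fun (fun x hx => ?_) measurableSet_Ioi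
  dsimp only
  rw [abs_mul, abs_of_pos (hw1 x hx), Real.mul_rpow (hw1 x hx).le (abs_nonneg _), mul_comm]

theorem stmt14 (p : ℝ) (hp : 1 < p) (w : ℝ → ℝ) (hwm : Measurable w)
    (hwpos : ∀ x ∈ Ioi (0:ℝ), 0 < w x)
    (hwint : ∀ x ∈ Ioi (0:ℝ), IntegrableOn (fun t => w t ^ p) (Ioi x))
    (hwinf : ¬ IntegrableOn (fun t => w t ^ p) (Ioi (0:ℝ)))
    (f : ℝ → ℝ) (hfm : Measurable f)
    (hfloc : ∀ x ∈ Ioi (0:ℝ), IntegrableOn f (Ioc 0 x))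
    (hfCh : IntegrableOn (fun x => |w x * ∫ t in Ioc (0:ℝ) x, f t| ^ p) (Ioi 0)) :
    Filter.liminf
      (fun s => |∫ t in Ioc (0:ℝ) s, f t| ^ p * ∫ t in Ioi s, w t ^ p)
      atTop = 0 :=
  stmt14_general p w hwpos hwint f hfCh
end
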